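/- For all real q > 0 and ρ > 0, (1/4)·max{q^{4/3}, qρ} ≤ ∫₀^q (ρ + min{ω^{1/3}, ω²/ρ⁵}) dω ≤ 3·max{q^{4/3}, qρ}. -/

import Mathlib

/-!
For `ω ≥ 0`, `max ρ (ω^{1/3}) ≤ ρ + min (ω^{1/3}) (ω²/ρ⁵) ≤ ρ + ω^{1/3}`, so the integral over `[0, q]`
lies between `max (qρ) (¾ q^{4/3})` and `qρ + ¾ q^{4/3}`.
-/

open MeasureTheory intervalIntegral

noncomputable def minDensity (ρ ω : ℝ) : ℝ :=
  ρ + min (ω ^ ((1:ℝ)/3)) (ω ^ 2 / ρ ^ 5)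

section minDensity

variable {ρ ω q : ℝ}

lemma continuous_minDensity (ρ : ℝ) : Continuous (minDensity ρ) :=
  continuous_const.add ((Real.continuous_rpow_const (by norm_num)).min
    ((continuous_pow 2).div_const _))

lemma minDensity_le_add_rpow_one_third (ρ ω : ℝ) : minDensity ρ ω ≤ ρ + ω ^ ((1:ℝ)/3) :=
  add_le_add_right (min_le_left _ _) ρ

lemma le_minDensity (hρ : 0 ≤ ρ) (hω : 0 ≤ ω) : ρ ≤ minDensity ρ ω :=
  le_add_of_nonneg_right (le_min (Real.rpow_nonneg hω _) (by positivity))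

/-- Below `ω = ρ³` the constant `ρ` already dominates `ω^{1/3}`; above it the minimum is the cusp. -/
lemma rpow_one_third_le_minDensity (hρ : 0 < ρ) (hω : 0 ≤ ω) :
    ω ^ ((1:ℝ)/3) ≤ minDensity ρ ω := by
  rcases le_or_gt (ω ^ ((1:ℝ)/3)) ρ with hsmall | hlarge
  · exact hsmall.trans (le_minDensity hρ.le hω)
  · set t := ω ^ ((1:ℝ)/3) with ht
    have hω_eq : ω = t ^ 3 := by
      rw [ht, ← Real.rpow_natCast, ← Real.rpow_mul hω]; norm_num
    have hρt : ρ ^ 5 ≤ t ^ 5 := pow_le_pow_left₀ hρ.le hlarge.le 5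
    have hcusp : t ≤ ω ^ 2 / ρ ^ 5 := by
      rw [le_div_iff₀ (by positivity), hω_eq]
      calc t * ρ ^ 5 ≤ t * t ^ 5 := mul_le_mul_of_nonneg_left hρt (by positivity)
        _ = (t ^ 3) ^ 2 := by ring
    rw [minDensity, min_eq_left hcusp]
    linarith

lemma integral_rpow_one_third (q : ℝ) :
    ∫ ω in (0:ℝ)..q, ω ^ ((1:ℝ)/3) = 3/4 * q ^ ((4:ℝ)/3) := by
  rw [integral_rpow (Or.inl (by norm_num)), Real.zero_rpow (by norm_num)]
  norm_num
  ring

lemma mul_le_integral_minDensity (hq : 0 ≤ q) (hρ : 0 < ρ) :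
    q * ρ ≤ ∫ ω in (0:ℝ)..q, minDensity ρ ω := by
  simpa using integral_mono_on hq (intervalIntegrable_const (μ := volume))
    ((continuous_minDensity ρ).intervalIntegrable 0 q) fun ω hω => le_minDensity hρ.le hω.1

lemma integral_rpow_one_third_le_integral_minDensity (hq : 0 ≤ q) (hρ : 0 < ρ) :
    3/4 * q ^ ((4:ℝ)/3) ≤ ∫ ω in (0:ℝ)..q, minDensity ρ ω := by
  rw [← integral_rpow_one_third]
  exact integral_mono_on hq
    (intervalIntegrable_rpow' (by norm_num))
    ((continuous_minDensity ρ).intervalIntegrable 0 q)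
    fun ω hω => rpow_one_third_le_minDensity hρ hω.1

lemma integral_minDensity_le (hq : 0 ≤ q) :
    ∫ ω in (0:ℝ)..q, minDensity ρ ω ≤ q * ρ + 3/4 * q ^ ((4:ℝ)/3) := by
  have hcusp : IntervalIntegrable (fun ω : ℝ => ω ^ ((1:ℝ)/3)) volume 0 q :=
    intervalIntegrable_rpow' (by norm_num)
  calc ∫ ω in (0:ℝ)..q, minDensity ρ ω ≤ ∫ ω in (0:ℝ)..q, (ρ + ω ^ ((1:ℝ)/3)) :=
        integral_mono_on hq ((continuous_minDensity ρ).intervalIntegrable 0 q)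
          (intervalIntegrable_const.add hcusp) fun ω _ => minDensity_le_add_rpow_one_third ρ ω
    _ = q * ρ + 3/4 * q ^ ((4:ℝ)/3) := by
        rw [integral_add intervalIntegrable_const hcusp, integral_rpow_one_third]
        simp

end minDensity

theorem stmt_2 (q ρ : ℝ) (hq : 0 < q) (hρ : 0 < ρ) :
    (1/4) * max (q ^ ((4:ℝ)/3)) (q * ρ) ≤
      (∫ ω in (0:ℝ)..q, (ρ + min (ω ^ ((1:ℝ)/3)) (ω ^ 2 / ρ ^ 5))) ∧
    (∫ ω in (0:ℝ)..q, (ρ + min (ω ^ ((1:ℝ)/3)) (ω ^ 2 / ρ ^ 5))) ≤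
      3 * max (q ^ ((4:ℝ)/3)) (q * ρ) := by
  have hlin := mul_le_integral_minDensity hq.le hρ
  have hcusp := integral_rpow_one_third_le_integral_minDensity hq.le hρ
  have hupper := integral_minDensity_le (ρ := ρ) hq.le
  have hpow : 0 ≤ q ^ ((4:ℝ)/3) := by positivity
  have hmax_left := le_max_left (q ^ ((4:ℝ)/3)) (q * ρ)
  have hmax_right := le_max_right (q ^ ((4:ℝ)/3)) (q * ρ)
  refine ⟨?_, by unfold minDensity at hupper; linarith⟩
  rw [mul_max_of_nonneg _ _ (by norm_num)]
  unfold minDensity at hlin hcusp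
  exact max_le (by linarith) (by nlinarith)
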